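/- Consider the sampled DPP-RL iteration with parameter η > 0: given an arbitrary sequence of sample next-state functions y_k : X×A → X for k ≥ 0, define the empirical Bellman operator (T_k^{π} Ψ)(x,a) = r(x,a) + γ (π Ψ)(y_k(x,a)) and the iterates Ψ_{k+1}(x,a) = Ψ_k(x,a) + (T_k^{π_k} Ψ_k)(x,a) − (π_k Ψ_k)(x), where π_k is the soft-max policy associated with Ψ_k. If ‖Ψ_0‖ ≤ V_max, then for every k ≥ 0: ‖T_k^{π_k} Ψ_k‖ ≤ 2γ log(L)/(η(1−γ)) + V_max, and the estimation error ε_k = T_k^{π_k} Ψ_k − T^{π_k} Ψ_k satisfies ‖ε_k‖ ≤ 4γ log(L)/(η(1−γ)) + 2 V_max. -/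

import Mathlib

open Finset Real Filter

variable {X A : Type*}

/-- `(πQ)(x) = Σ_a π(a|x) Q(x,a)`. -/
noncomputable def polApply [Fintype A] (pol : X → A → ℝ) (Q : X → A → ℝ) : X → ℝ :=
  fun x => ∑ a, pol x a * Q x a

/-- Bellman operator `T^π`. -/
noncomputable def bellman [Fintype X] [Fintype A]
    (P : X → A → X → ℝ) (r : X → A → ℝ) (γ : ℝ) (pol : X → A → ℝ)
    (Q : X → A → ℝ) : X → A → ℝ :=
  fun x a => r x a + γ * ∑ x', ∑ a', P x a x' * pol x' a' * Q x' a'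

/-- Bellman optimality operator `T`. -/
noncomputable def bellmanOpt [Fintype X] [Fintype A] [Nonempty A]
    (P : X → A → X → ℝ) (r : X → A → ℝ) (γ : ℝ) (Q : X → A → ℝ) : X → A → ℝ :=
  fun x a => r x a + γ * ∑ x', P x a x' * (Finset.univ.sup' Finset.univ_nonempty (Q x'))

/-- Soft-max policy associated with action preferences `Ψ` at inverse temperature `η`. -/
noncomputable def softmaxPol [Fintype A] (η : ℝ) (Ψ : X → A → ℝ) : X → A → ℝ :=
  fun x a => Real.exp (η * Ψ x a) / ∑ a', Real.exp (η * Ψ x a')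

/-- Supremum norm over state-action pairs. -/
noncomputable def supNorm [Fintype X] [Fintype A] [Nonempty X] [Nonempty A]
    (Q : X → A → ℝ) : ℝ :=
  Finset.univ.sup' Finset.univ_nonempty (fun p : X × A => |Q p.1 p.2|)

/-!
Write `c = log L / η` and `m_k = π_k Ψ_k`. The soft-max average of a row lies between its
maximum minus `c` (the entropy of `π_k(·|x)` is at most `log L`) and its maximum. Since
`Ψ_{k+1}(x,a) = Ψ_k(x,a) - m_k(x) + T_k^{π_k} Ψ_k(x,a)`, where `Ψ_k(x,a) - m_k(x)` is at most `c`
and is nonnegative at a maximising action, the bound `‖m_k‖ ≤ B` propagates as soon as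
`c + R_max + γ B ≤ B`; take `B = (R_max + c)/(1-γ)`. Both claims then follow from
`‖T_k^{π_k} Ψ_k‖ ≤ R_max + γ B` and `‖T_k^{π_k} Ψ_k - T^{π_k} Ψ_k‖ ≤ 2 γ B`.
-/

lemma supNorm_le_iff [Fintype X] [Fintype A] [Nonempty X] [Nonempty A]
    {Q : X → A → ℝ} {b : ℝ} : supNorm Q ≤ b ↔ ∀ x a, |Q x a| ≤ b := by
  simp [supNorm, Finset.sup'_le_iff, Prod.forall]

lemma abs_sum_mul_le_of_sum_eq_one {ι : Type*} {s : Finset ι} {w f : ι → ℝ} {b : ℝ}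
    (hw₀ : ∀ i ∈ s, 0 ≤ w i) (hw₁ : ∑ i ∈ s, w i = 1) (hf : ∀ i ∈ s, |f i| ≤ b) :
    |∑ i ∈ s, w i * f i| ≤ b :=
  abs_le.2 ((convex_Icc (-b) b).sum_mem hw₀ hw₁ fun i hi => abs_le.1 (hf i hi))

lemma sum_mul_le_of_sum_eq_one {ι : Type*} {s : Finset ι} {w f : ι → ℝ} {b : ℝ}
    (hw₀ : ∀ i ∈ s, 0 ≤ w i) (hw₁ : ∑ i ∈ s, w i = 1) (hf : ∀ i ∈ s, f i ≤ b) :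
    ∑ i ∈ s, w i * f i ≤ b :=
  (convex_Iic b).sum_mem hw₀ hw₁ hf

lemma sum_mul_log_inv_le_log_card {ι : Type*} [Fintype ι] {p : ι → ℝ}
    (hp : ∀ i, 0 < p i) (hp₁ : ∑ i, p i = 1) :
    ∑ i, p i * log (p i)⁻¹ ≤ log (Fintype.card ι) := by
  have jensen := strictConcaveOn_log_Ioi.concaveOn.le_map_sum (t := univ) (p := fun i => (p i)⁻¹)
    (fun i _ => (hp i).le) hp₁ fun i _ => Set.mem_Ioi.2 (inv_pos.2 (hp i))
  simp only [smul_eq_mul] at jensen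
  rwa [sum_congr rfl fun i _ => mul_inv_cancel₀ (hp i).ne', sum_const, card_univ,
    nsmul_eq_mul, mul_one] at jensen

lemma bellman_eq_sum_polApply [Fintype X] [Fintype A] (P : X → A → X → ℝ) (r : X → A → ℝ)
    (γ : ℝ) (pol Q : X → A → ℝ) (x : X) (a : A) :
    bellman P r γ pol Q x a = r x a + γ * ∑ x', P x a x' * polApply pol Q x' := by
  simp only [bellman, polApply, mul_sum, mul_assoc]

section softmax

variable [Fintype A] [Nonempty A]

lemma softmaxPol_pos (η : ℝ) (Ψ : X → A → ℝ) (x : X) (a : A) : 0 < softmaxPol η Ψ x a :=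
  div_pos (exp_pos _) (sum_pos (fun _ _ => exp_pos _) univ_nonempty)

lemma sum_softmaxPol (η : ℝ) (Ψ : X → A → ℝ) (x : X) : ∑ a, softmaxPol η Ψ x a = 1 := by
  simp only [softmaxPol, ← sum_div]
  exact div_self (sum_pos (fun _ _ => exp_pos _) univ_nonempty).ne'

lemma polApply_softmaxPol_le_sup' (η : ℝ) (Ψ : X → A → ℝ) (x : X) :
    polApply (softmaxPol η Ψ) Ψ x ≤ univ.sup' univ_nonempty (Ψ x) :=
  sum_mul_le_of_sum_eq_one (fun a _ => (softmaxPol_pos η Ψ x a).le) (sum_softmaxPol η Ψ x)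
    fun a _ => le_sup' (Ψ x) (mem_univ a)

lemma sup'_sub_le_polApply_softmaxPol {η : ℝ} (hη : 0 < η) (Ψ : X → A → ℝ) (x : X) :
    univ.sup' univ_nonempty (Ψ x) - log (Fintype.card A) / η ≤
      polApply (softmaxPol η Ψ) Ψ x := by
  set S := ∑ a, exp (η * Ψ x a)
  have hS : 0 < S := sum_pos (fun _ _ => exp_pos _) univ_nonempty
  have hlog : ∀ a, log (softmaxPol η Ψ x a)⁻¹ = log S - η * Ψ x a := fun a => by
    rw [softmaxPol, inv_div, log_div hS.ne' (exp_pos _).ne', log_exp]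
  have entropy : ∑ a, softmaxPol η Ψ x a * log (softmaxPol η Ψ x a)⁻¹ =
      log S - η * polApply (softmaxPol η Ψ) Ψ x := by
    simp only [hlog, mul_sub, sum_sub_distrib, ← sum_mul, sum_softmaxPol, one_mul, polApply,
      mul_sum, mul_left_comm]
  have hmax : η * univ.sup' univ_nonempty (Ψ x) ≤ log S := by
    obtain ⟨a₀, -, ha₀⟩ := exists_mem_eq_sup' univ_nonempty (Ψ x)
    rw [ha₀, ← log_exp (η * Ψ x a₀)]
    exact log_le_log (exp_pos _) (single_le_sum (fun a _ => (exp_pos (η * Ψ x a)).le)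
      (mem_univ a₀))
  have entropy_le := sum_mul_log_inv_le_log_card (softmaxPol_pos η Ψ x) (sum_softmaxPol η Ψ x)
  rw [sub_le_iff_le_add, ← mul_le_mul_iff_right₀ hη, mul_add, mul_div_cancel₀ _ hη.ne']
  linarith

lemma abs_polApply_softmaxPol_le {η : ℝ} (hη : 0 < η) {Ψ : X → A → ℝ} {x : X} {b : ℝ}
    (hup : ∀ a, Ψ x a ≤ b + log (Fintype.card A) / η) (hlo : ∃ a, -b ≤ Ψ x a) :
    |polApply (softmaxPol η Ψ) Ψ x| ≤ b + log (Fintype.card A) / η := by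
  obtain ⟨a, ha⟩ := hlo
  have hsup_le := sup'_le univ_nonempty (Ψ x) fun a _ => hup a
  have hle_sup := le_sup' (Ψ x) (mem_univ a)
  have := polApply_softmaxPol_le_sup' η Ψ x
  have := sup'_sub_le_polApply_softmaxPol hη Ψ x
  rw [abs_le]
  constructor <;> linarith

lemma abs_polApply_softmaxPol_step_le {η : ℝ} (hη : 0 < η) {Ψ Ψ' : X → A → ℝ} {x : X}
    {g : A → ℝ} {b : ℝ} (hΨ' : ∀ a, Ψ' x a = Ψ x a + g a - polApply (softmaxPol η Ψ) Ψ x)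
    (hg : ∀ a, |g a| ≤ b) :
    |polApply (softmaxPol η Ψ') Ψ' x| ≤ b + log (Fintype.card A) / η := by
  refine abs_polApply_softmaxPol_le hη (fun a => ?_) ?_
  · have := le_sup' (Ψ x) (mem_univ a)
    have := sup'_sub_le_polApply_softmaxPol hη Ψ x
    linarith [hΨ' a, (abs_le.1 (hg a)).2]
  · obtain ⟨a₀, -, ha₀⟩ := exists_mem_eq_sup' univ_nonempty (Ψ x)
    have := polApply_softmaxPol_le_sup' η Ψ x
    exact ⟨a₀, by linarith [hΨ' a₀, (abs_le.1 (hg a₀)).1]⟩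

end softmax

lemma abs_add_mul_le {u v R B γ : ℝ} (hu : |u| ≤ R) (hv : |v| ≤ B) (hγ : 0 ≤ γ) :
    |u + γ * v| ≤ R + γ * B :=
  (abs_add_le _ _).trans (add_le_add hu (by rw [abs_mul, abs_of_nonneg hγ]; gcongr))

lemma abs_polApply_softmaxPol_iterate_le [Fintype A] [Nonempty A] {η γ Rmax : ℝ} (hη : 0 < η)
    (hγ0 : 0 ≤ γ) (hγ1 : γ < 1) {r : X → A → ℝ} (hr : ∀ x a, |r x a| ≤ Rmax)
    {y : ℕ → X → A → X} {Ψ : ℕ → X → A → ℝ} (hΨ0 : ∀ x a, |Ψ 0 x a| ≤ Rmax / (1 - γ))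
    (hΨ : ∀ k x a, Ψ (k + 1) x a =
      Ψ k x a + (r x a + γ * polApply (softmaxPol η (Ψ k)) (Ψ k) (y k x a)) -
        polApply (softmaxPol η (Ψ k)) (Ψ k) x) (k : ℕ) (x : X) :
    |polApply (softmaxPol η (Ψ k)) (Ψ k) x| ≤ (Rmax + log (Fintype.card A) / η) / (1 - γ) := by
  set c := log (Fintype.card A) / η
  have hc : 0 ≤ c := div_nonneg (log_nonneg (mod_cast Fintype.card_pos)) hη.le
  have hγ' : 0 < 1 - γ := by linarith
  induction k generalizing x with
  | zero =>
    refine (abs_polApply_softmaxPol_le hη (b := Rmax / (1 - γ)) (fun a => ?_)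
      ⟨Classical.arbitrary A, (abs_le.1 (hΨ0 x _)).1⟩).trans ?_
    · linarith [(abs_le.1 (hΨ0 x a)).2]
    · rw [add_div, add_le_add_iff_left, le_div_iff₀ hγ']
      nlinarith
  | succ k ih =>
    have hfix : Rmax + γ * ((Rmax + c) / (1 - γ)) + c = (Rmax + c) / (1 - γ) := by
      field_simp
      ring
    rw [← hfix]
    exact abs_polApply_softmaxPol_step_le hη (hΨ k x) fun a => abs_add_mul_le (hr x a) (ih _) hγ0

theorem dpp_rl_stability_general
    {X A : Type*} [Fintype X] [Fintype A] [Nonempty X] [Nonempty A]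
    (P : X → A → X → ℝ) (hP0 : ∀ x a x', 0 ≤ P x a x') (hP1 : ∀ x a, ∑ x', P x a x' = 1)
    (r : X → A → ℝ) (Rmax : ℝ) (hr : ∀ x a, |r x a| ≤ Rmax)
    (γ : ℝ) (hγ0 : 0 ≤ γ) (hγ1 : γ < 1)
    (Vmax : ℝ) (hV : Vmax = Rmax / (1 - γ))
    (η : ℝ) (hη : 0 < η)
    (y : ℕ → X → A → X)
    (Ψ : ℕ → X → A → ℝ) (hΨ0 : supNorm (Ψ 0) ≤ Vmax)
    (pol : ℕ → X → A → ℝ) (hpol : ∀ k, pol k = softmaxPol η (Ψ k))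
    (hΨ : ∀ k x a, Ψ (k + 1) x a =
      Ψ k x a + (r x a + γ * polApply (pol k) (Ψ k) (y k x a)) -
        polApply (pol k) (Ψ k) x) :
    ∀ k : ℕ,
      supNorm (fun x a => r x a + γ * polApply (pol k) (Ψ k) (y k x a)) ≤
        2 * γ * Real.log (Fintype.card A) / (η * (1 - γ)) + Vmax ∧
      supNorm (fun x a =>
          (r x a + γ * polApply (pol k) (Ψ k) (y k x a)) -
            bellman P r γ (pol k) (Ψ k) x a) ≤
        4 * γ * Real.log (Fintype.card A) / (η * (1 - γ)) + 2 * Vmax := by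
  obtain rfl : pol = fun k => softmaxPol η (Ψ k) := funext hpol
  subst hV
  have hm := abs_polApply_softmaxPol_iterate_le hη hγ0 hγ1 hr (supNorm_le_iff.1 hΨ0) hΨ
  have hlog : 0 ≤ log (Fintype.card A) := log_nonneg (mod_cast Fintype.card_pos)
  have hR : 0 ≤ Rmax := (abs_nonneg _).trans (hr (Classical.arbitrary X) (Classical.arbitrary A))
  have hγ' : 0 < 1 - γ := by linarith
  intro k
  refine ⟨supNorm_le_iff.2 fun x a => ?_, supNorm_le_iff.2 fun x a => ?_⟩
  · refine (abs_add_mul_le (hr x a) (hm k (y k x a)) hγ0).trans (le_of_sub_nonneg ?_)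
    field_simp
    nlinarith [mul_nonneg hγ0 hlog]
  · have hPm := abs_sum_mul_le_of_sum_eq_one (fun x' _ => hP0 x a x') (hP1 x a)
      fun x' _ => hm k x'
    rw [bellman_eq_sum_polApply, add_sub_add_left_eq_sub, ← mul_sub, abs_mul, abs_of_nonneg hγ0]
    refine (mul_le_mul_of_nonneg_left ((abs_sub _ _).trans (add_le_add (hm k _) hPm)) hγ0).trans
      (le_of_sub_nonneg ?_)
    field_simp
    nlinarith [mul_nonneg hγ0 hlog, mul_nonneg (mul_nonneg hη.le hR) hγ'.le]

/-- Lemma 7 of the paper (stability of DPP-RL): the empirical Bellman operator values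
and the estimation errors of the sampled DPP-RL iteration are uniformly bounded. -/
theorem dpp_rl_stability
    {X A : Type*} [Fintype X] [Fintype A] [Nonempty X] [Nonempty A]
    (P : X → A → X → ℝ) (hP0 : ∀ x a x', 0 ≤ P x a x') (hP1 : ∀ x a, ∑ x', P x a x' = 1)
    (r : X → A → ℝ) (Rmax : ℝ) (hR : 0 < Rmax) (hr : ∀ x a, |r x a| ≤ Rmax)
    (γ : ℝ) (hγ0 : 0 ≤ γ) (hγ1 : γ < 1)
    (Vmax : ℝ) (hV : Vmax = Rmax / (1 - γ))
    (η : ℝ) (hη : 0 < η)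
    (y : ℕ → X → A → X)
    (Ψ : ℕ → X → A → ℝ) (hΨ0 : supNorm (Ψ 0) ≤ Vmax)
    (pol : ℕ → X → A → ℝ) (hpol : ∀ k, pol k = softmaxPol η (Ψ k))
    (hΨ : ∀ k x a, Ψ (k + 1) x a =
      Ψ k x a + (r x a + γ * polApply (pol k) (Ψ k) (y k x a)) -
        polApply (pol k) (Ψ k) x) :
    ∀ k : ℕ,
      supNorm (fun x a => r x a + γ * polApply (pol k) (Ψ k) (y k x a)) ≤
        2 * γ * Real.log (Fintype.card A) / (η * (1 - γ)) + Vmax ∧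
      supNorm (fun x a =>
          (r x a + γ * polApply (pol k) (Ψ k) (y k x a)) -
            bellman P r γ (pol k) (Ψ k) x a) ≤
        4 * γ * Real.log (Fintype.card A) / (η * (1 - γ)) + 2 * Vmax :=
  dpp_rl_stability_general P hP0 hP1 r Rmax hr γ hγ0 hγ1 Vmax hV η hη y Ψ hΨ0 pol hpol hΨ
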